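/- arXiv:2102.11867 — 4 statements merged into one kernel-verified Lean document; each statement's English description precedes it below -/
import Mathlib

section
/- Let h : S¹ → S¹ be a continuous map of degree k. Then h has at least |k - 1| fixed points. -/
/-!
Dividing by the identity, `g z = h z * z⁻¹` is homotopic to `z ↦ z ^ (k - 1)`, and the fixed points
of `h` are the solutions of `g z = 1`. Lifting that homotopy through the covering map
`Circle.exp : ℝ → Circle` gives a lift `F` of `g ∘ Circle.exp` with `F (t + 2π) = F t + 2π (k - 1)`.
By the intermediate value theorem `F` takes each of `|k - 1|` consecutive values in `2πℤ` on
`[0, 2π)`, where `Circle.exp` is injective.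
-/

open Real Set

namespace ContinuousMap.Homotopic

variable {X G : Type*} [TopologicalSpace X] [TopologicalSpace G] [Mul G] [ContinuousMul G]

theorem mul {f₀ f₁ g₀ g₁ : C(X, G)} (hf : f₀.Homotopic f₁) (hg : g₀.Homotopic g₁) :
    (f₀ * g₀).Homotopic (f₁ * g₁) :=
  (Homotopic.refl ⟨fun p : G × G => p.1 * p.2, continuous_mul⟩).comp (hf.prodMk hg)

end ContinuousMap.Homotopic

theorem ContinuousOn.exists_finset_card_eq_of_map_eq_add_nat_mul {F : ℝ → ℝ} {a b c : ℝ} {n : ℕ}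
    (hF : ContinuousOn F (Icc a b)) (hab : a ≤ b) (hc : 0 < c) (hFab : F b = F a + n * c) :
    ∃ S : Finset ℝ, ↑S ⊆ Ico a b ∧ S.card = n ∧ ∀ t ∈ S, ∃ m : ℤ, F t = m * c := by
  set m₀ := ⌈F a / c⌉
  have hmem : ∀ m ∈ Finset.Ico m₀ (m₀ + n), m * c ∈ Ico (F a) (F b) := by
    intro m hm
    rw [Finset.mem_Ico] at hm
    have h₁ : F a ≤ m * c := (div_le_iff₀ hc).mp (Int.ceil_le.mp hm.1)
    have h₂ : (m - n) * c < F a :=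
      (lt_div_iff₀ hc).mp (by exact_mod_cast Int.lt_ceil.mp (by omega : m - n < m₀))
    exact ⟨h₁, by linarith⟩
  choose! t ht hFt using fun m hm => intermediate_value_Ico hab hF (hmem m hm)
  have ht_inj : InjOn t (Finset.Ico m₀ (m₀ + n)) := fun m hm m' hm' h => by
    have := (hFt m hm).symm.trans (h ▸ hFt m' hm')
    exact_mod_cast mul_right_cancel₀ hc.ne' this
  refine ⟨(Finset.Ico m₀ (m₀ + n)).image t, ?_, ?_, ?_⟩
  · rw [Finset.coe_image]
    exact image_subset_iff.mpr ht
  · simp [Finset.card_image_of_injOn ht_inj]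
  · simp only [Finset.forall_mem_image]
    exact fun m hm => ⟨m, hFt m hm⟩

theorem ContinuousMap.exists_lift_circleExp_of_homotopic_zpow (g : C(Circle, Circle)) (n : ℤ)
    (hg : g.Homotopic ⟨(· ^ n), by fun_prop⟩) :
    ∃ F : ℝ → ℝ, Continuous F ∧ (∀ t, Circle.exp (F t) = g (Circle.exp t)) ∧
      ∀ t, F (t + 2 * π) = F t + n * (2 * π) := by
  obtain ⟨H⟩ := hg.symm
  let H' : C(unitInterval × ℝ, Circle) :=
    H.toContinuousMap.comp ((ContinuousMap.id _).prodMap ⟨Circle.exp, Circle.exp.continuous⟩)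
  have H'_zero (t : ℝ) : H' (0, t) = Circle.exp ((⟨(n * ·), by fun_prop⟩ : C(ℝ, ℝ)) t) := by
    simp [H']
  let L := Circle.isCoveringMap_exp.liftHomotopy H' _ H'_zero
  have hL (s t) : Circle.exp (L (s, t)) = H (s, Circle.exp t) :=
    congr_fun (Circle.isCoveringMap_exp.liftHomotopy_lifts H' _ H'_zero) (s, t)
  refine ⟨fun t => L (1, t), by fun_prop, fun t => by simp [hL], fun t => ?_⟩
  -- both sides lift `s ↦ H (s, Circle.exp t)` and agree at `s = 0`
  have := Circle.isCoveringMap_exp.eq_of_comp_eq (g₁ := fun s => L (s, t + 2 * π))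
    (g₂ := fun s => L (s, t) + n * (2 * π)) (by fun_prop) (by fun_prop)
    (funext fun s => by simp [hL, Circle.exp_add]) 0
    (by simp [L, Circle.isCoveringMap_exp.liftHomotopy_zero]; ring)
  exact congr_fun this 1

theorem ContinuousMap.exists_finset_card_eq_natAbs_of_homotopic_zpow (g : C(Circle, Circle))
    (n : ℤ) (hg : g.Homotopic ⟨(· ^ n), by fun_prop⟩) :
    ∃ S : Finset Circle, S.card = n.natAbs ∧ ∀ z ∈ S, g z = 1 := by
  obtain ⟨F, hFc, hF, hFper⟩ := g.exists_lift_circleExp_of_homotopic_zpow n hg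
  obtain ⟨G, hGc, hG, hGper⟩ : ∃ G : ℝ → ℝ, Continuous G ∧
      (∀ t, Circle.exp (G t) = 1 → g (Circle.exp t) = 1) ∧
      G (2 * π) = G 0 + n.natAbs * (2 * π) := by
    have hper := hFper 0
    rw [zero_add] at hper
    obtain ⟨m, rfl | rfl⟩ := Int.eq_nat_or_neg n
    · exact ⟨F, hFc, fun t ht => hF t ▸ ht, by simpa using hper⟩
    · refine ⟨fun t => -F t, hFc.neg, fun t ht => ?_, ?_⟩
      · rwa [Circle.exp_neg, inv_eq_one, hF] at ht
      · simp only [hper, Int.natAbs_neg, Int.natAbs_natCast, Int.cast_neg, Int.cast_natCast]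
        ring
  obtain ⟨S, hS, hScard, hSG⟩ := hGc.continuousOn.exists_finset_card_eq_of_map_eq_add_nat_mul
    (by positivity) (by positivity) hGper
  classical
  refine ⟨S.image Circle.exp, ?_, ?_⟩
  · rw [Finset.card_image_of_injOn ((Circle.exp_injOn_Ico (by simp)).mono hS), hScard]
  · simp only [Finset.forall_mem_image]
    intro t ht
    obtain ⟨m, hm⟩ := hSG t ht
    exact hG t (by rw [hm, Circle.exp_int_mul_two_pi])

/-- A continuous circle map of degree `k` has at least `|k - 1|` fixed points. -/
theorem circle_degree_fixed_points (h : C(Circle, Circle)) (k : ℤ)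
    (hdeg : ContinuousMap.Homotopic h ⟨fun z => z ^ k, by fun_prop⟩) :
    ∃ S : Finset Circle, S.card = (k - 1).natAbs ∧ ∀ z ∈ S, h z = z := by
  have hg : (h * (ContinuousMap.id Circle)⁻¹).Homotopic ⟨(· ^ (k - 1)), by fun_prop⟩ := by
    convert hdeg.mul (.refl (ContinuousMap.id Circle)⁻¹)
    ext
    simp [zpow_sub_one]
  obtain ⟨S, hScard, hS⟩ := ContinuousMap.exists_finset_card_eq_natAbs_of_homotopic_zpow _ _ hg
  exact ⟨S, hScard, fun z hz => mul_inv_eq_one.mp (hS z hz)⟩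
end

section
/- Let F be a flow on X, U ⊂ X open and connected, such that every point of U is non-fixed and admits a flow-box chart. If α, α' : U → ℝ are continuous functions with F(x, α(x)) = F(x, α'(x)) for all x ∈ U and α(x₀) = α'(x₀) at some point x₀ ∈ U, then α = α' on all of U. -/
/-- `(φ, U)` is a flow-box chart of the flow `F` at the point `z`. -/
def IsFlowBoxChart {X Y : Type*} [TopologicalSpace X] [TopologicalSpace Y]
    (F : X × ℝ → X) (z : X) (U : Set X) (φ : X → Y × ℝ) : Prop :=
  IsOpen U ∧ z ∈ U ∧ Topology.IsOpenEmbedding (U.restrict φ) ∧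
    ∃ ε > (0 : ℝ), ∃ V : Set X, IsOpen V ∧ z ∈ V ∧ V ⊆ U ∧
      ∀ w ∈ V, ∀ t ∈ Set.Ioo (-ε) ε, φ (F (w, t)) = ((φ w).1, (φ w).2 + t)

/-- Local uniqueness of shift functions: if two continuous shift functions define
the same shift map on a connected open set of non-fixed points admitting flow-box
charts, and agree at one point, then they coincide. -/
theorem shift_function_unique {X : Type} [TopologicalSpace X]
    (F : X × ℝ → X) (hFc : Continuous F)
    (hF0 : ∀ x, F (x, 0) = x) (hFadd : ∀ x s t, F (F (x, s), t) = F (x, s + t))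
    (U : Set X) (hUopen : IsOpen U) (hUconn : IsConnected U)
    (hnf : ∀ x ∈ U, ∃ t : ℝ, F (x, t) ≠ x)
    (hfb : ∀ x ∈ U, ∃ (Y : Type) (_ : TopologicalSpace Y) (U' : Set X) (φ : X → Y × ℝ),
      IsFlowBoxChart F x U' φ)
    (α α' : U → ℝ) (hα : Continuous α) (hα' : Continuous α')
    (heq : ∀ x : U, F (x, α x) = F (x, α' x))
    (x₀ : U) (h₀ : α x₀ = α' x₀) :
    α = α' := by
  have hconn : ConnectedSpace U := Subtype.connectedSpace hUconn
  set S : Set U := {x | α x = α' x} with hS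
  have hclosed : IsClosed S := isClosed_eq hα hα'
  have hopen : IsOpen S := by
    rw [isOpen_iff_mem_nhds]
    intro x hx
    obtain ⟨Y, _, U', φ, hU'open, hzU', hemb, ε, hε, V, hVopen, hxV, hVU', hkey⟩ :=
      hfb ↑x x.2
    have hd : Continuous (fun w : U => α' w - α w) := hα'.sub hα
    set W : Set U := (Subtype.val ⁻¹' V) ∩ (fun w : U => α' w - α w) ⁻¹' Set.Ioo (-ε) ε
      with hW
    have hWopen : IsOpen W :=
      (hVopen.preimage continuous_subtype_val).inter (isOpen_Ioo.preimage hd)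
    have hxW : x ∈ W := by
      refine ⟨hxV, ?_⟩
      have : α x = α' x := hx
      simp [Set.mem_Ioo, this, hε]
    refine Filter.mem_of_superset (hWopen.mem_nhds hxW) ?_
    intro w hw
    have hFw : F (↑w, α' w - α w) = ↑w := by
      have h1 : F (F (↑w, α' w), -α w) = F (↑w, α' w - α w) := by
        rw [hFadd]; ring_nf
      have h2 : F (F (↑w, α w), -α w) = ↑w := by
        rw [hFadd]; simp [hF0]
      rw [← h1, ← heq w, h2]
    have key := hkey ↑w hw.1 (α' w - α w) hw.2
    rw [hFw] at key
    have h2 := congrArg Prod.snd key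
    simp only [] at h2
    have : α' w - α w = 0 := by linarith [h2]
    show α w = α' w
    linarith
  have hne : S.Nonempty := ⟨x₀, h₀⟩
  have : S = Set.univ := IsClopen.eq_univ ⟨hclosed, hopen⟩ hne
  funext x
  have hx : x ∈ S := this ▸ Set.mem_univ x
  exact hx
end

section
/- Let F : S¹ × ℝ → S¹ be a fixed-point-free continuous flow on the circle (so S¹ is a single periodic orbit of some period θ > 0). A continuous map h : S¹ → S¹ has degree 1 if and only if there exists a continuous function α : S¹ → ℝ with h(z) = F(z, α(z)) for all z; moreover such α is unique up to adding an integer multiple of θ. -/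
/-!
The orbit map `t ↦ F (z₀, t)` descends to a continuous injection `AddCircle θ → Circle`. It is
onto: otherwise composing with a chart of the circle minus a point would give a continuous
injection `AddCircle θ → ℝ`, whereas every continuous `g : AddCircle θ → ℝ` satisfies
`g x = g (x + θ / 2)` for some `x`, by the intermediate value theorem applied to
`x ↦ g (x + θ / 2) - g x`, which changes sign under `x ↦ x + θ / 2`. So the flow is conjugate to
translation on `AddCircle θ`, and `h` is a shift along the flow iff `x ↦ h x - x` lifts through
the covering `ℝ → AddCircle θ`. Homotopy lifting provides the lift when `h` is homotopic to the
identity, and `(s, z) ↦ F (z, (1 - s) α z)` is a homotopy in the other direction. Two shift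
functions differ by a continuous map into the discrete group `θℤ`, hence by a constant.
-/

open Set Function unitInterval

namespace AddCircle

variable {θ : ℝ}

theorem exists_continuous_eq_add_of_homotopic {A : Type*} [TopologicalSpace A]
    {f g : C(A, AddCircle θ)} (hfg : f.Homotopic g) :
    ∃ α : A → ℝ, Continuous α ∧ ∀ a, f a = g a + α a := by
  obtain ⟨H⟩ := hfg.symm
  let D : C(I × A, AddCircle θ) := ⟨fun p => H p - g p.2, by fun_prop⟩
  let L := (isCoveringMap_coe θ).liftHomotopy D (.const A 0) fun a => by simp [D]
  refine ⟨fun a => L (1, a), by fun_prop, fun a => ?_⟩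
  have hL : ((L (1, a) : ℝ) : AddCircle θ) = f a - g a := by
    simpa [D] using congr_fun ((isCoveringMap_coe θ).liftHomotopy_lifts D _ _) (1, a)
  rw [hL, add_sub_cancel]

theorem exists_apply_add_half_period_eq {g : AddCircle θ → ℝ} (hg : Continuous g) :
    ∃ x, g x = g (x + (θ / 2 : ℝ)) := by
  have hshift : Continuous fun x => g (x + (θ / 2 : ℝ)) := hg.comp (continuous_add_const _)
  have hback : g ((θ / 2 : ℝ) + (θ / 2 : ℝ)) = g 0 := by rw [← coe_add, add_halves, coe_period]
  rcases le_total (g 0) (g (θ / 2 : ℝ)) with h | h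
  · exact intermediate_value_univ₂ (a := 0) hg hshift (by simpa using h) (hback.trans_le h)
  · obtain ⟨x, hx⟩ := intermediate_value_univ₂ (a := 0) hshift hg (by simpa using h)
      (h.trans_eq hback.symm)
    exact ⟨x, hx.symm⟩

variable [Fact (0 < θ)]

theorem half_period_ne_zero : ((θ / 2 : ℝ) : AddCircle θ) ≠ 0 := by
  intro h
  have := addOrderOf_period_div (p := θ) (n := 2) two_pos
  rw [Nat.cast_ofNat, h, addOrderOf_zero] at this
  exact absurd this (by norm_num)

theorem not_injective_of_continuous {g : AddCircle θ → ℝ} (hg : Continuous g) :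
    ¬ Injective g := fun hinj => by
  obtain ⟨x, hx⟩ := exists_apply_add_half_period_eq hg
  exact half_period_ne_zero (left_eq_add.mp (hinj hx))

theorem surjective_of_continuous_injective {f : AddCircle θ → Circle} (hf : Continuous f)
    (hinj : Injective f) : Surjective f := by
  intro w
  by_contra! hw
  have : Fact (0 < 2 * Real.pi) := ⟨Real.two_pi_pos⟩
  let e := homeomorphCircle'
  have hne : ∀ x, e.symm (f x) ≠ (Complex.arg w : AddCircle (2 * Real.pi)) := fun x h => by
    apply hw x
    rw [← e.apply_symm_apply (f x), h, homeomorphCircle'_apply_mk, Circle.exp_arg]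
  refine not_injective_of_continuous (g := fun x => equivIco _ (Complex.arg w) (e.symm (f x)))
    (continuous_iff_continuousAt.2 fun x => ?_) ?_
  · exact continuousAt_subtype_val.comp
      ((continuousAt_equivIco _ _ (hne x)).comp e.symm.continuous.continuousAt |>.comp
        hf.continuousAt)
  · exact Subtype.val_injective.comp ((equivIco _ _).injective.comp (e.symm.injective.comp hinj))

end AddCircle

section Flow

variable {X : Type*} {F : X × ℝ → X}

theorem periodic_flow (hFadd : ∀ x s t, F (F (x, s), t) = F (x, s + t)) {x₀ : X} {θ : ℝ}
    (hθ : F (x₀, θ) = x₀) : Periodic (fun t => F (x₀, t)) θ := fun t => by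
  simp only
  rw [add_comm, ← hFadd, hθ]

theorem flow_eq_flow_iff (hFadd : ∀ x s t, F (F (x, s), t) = F (x, s + t)) {x₀ : X} {θ : ℝ}
    (hper : ∀ t, F (x₀, t) = x₀ ↔ ∃ n : ℤ, t = n * θ) {s t : ℝ} :
    F (x₀, s) = F (x₀, t) ↔ (s : AddCircle θ) = t := by
  have hF0 : F (x₀, 0) = x₀ := (hper 0).2 ⟨0, by simp⟩
  rw [QuotientAddGroup.eq, AddSubgroup.mem_zmultiples_iff, neg_add_eq_sub]
  constructor
  · intro h
    obtain ⟨n, hn⟩ := (hper (t - s)).1 <| calc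
      F (x₀, t - s) = F (F (x₀, t), -s) := by rw [hFadd, sub_eq_add_neg]
      _ = F (F (x₀, s), -s) := by rw [h]
      _ = x₀ := by rw [hFadd, add_neg_cancel, hF0]
    exact ⟨n, by rw [zsmul_eq_mul, hn]⟩
  · rintro ⟨n, hn⟩
    rw [zsmul_eq_mul, eq_sub_iff_add_eq'] at hn
    rw [← hn]
    exact ((periodic_flow hFadd ((hper θ).2 ⟨1, by simp⟩)).int_mul n s).symm

variable [TopologicalSpace X]

theorem homotopic_id_of_eq_flow (hFc : Continuous F) (hF0 : ∀ x, F (x, 0) = x) {h : C(X, X)}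
    {α : X → ℝ} (hα : Continuous α) (hh : ∀ x, h x = F (x, α x)) :
    h.Homotopic (ContinuousMap.id X) :=
  ⟨{ toFun := fun p => F (p.2, (1 - p.1 : ℝ) * α p.2)
     map_zero_left := fun x => by simp [hh]
     map_one_left := fun x => by simp [hF0] }⟩

theorem exists_int_eq_add_mul_of_flow_eq [PreconnectedSpace X]
    (hFadd : ∀ x s t, F (F (x, s), t) = F (x, s + t)) {θ : ℝ}
    (hper : ∀ x t, F (x, t) = x → ∃ n : ℤ, t = n * θ) {α α' : X → ℝ} (hα : Continuous α)
    (hα' : Continuous α') (heq : ∀ x, F (x, α x) = F (x, α' x)) :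
    ∃ n : ℤ, ∀ x, α' x = α x + n * θ := by
  have hmem : ∀ x, α' x - α x ∈ AddSubgroup.zmultiples θ := fun x => by
    obtain ⟨n, hn⟩ := hper (F (x, α x)) (α' x - α x) (by rw [hFadd, add_sub_cancel, heq])
    exact AddSubgroup.mem_zmultiples_iff.2 ⟨n, by rw [hn, zsmul_eq_mul]⟩
  rcases isEmpty_or_nonempty X with _ | ⟨⟨x₀⟩⟩
  · exact ⟨0, isEmptyElim⟩
  obtain ⟨n, hn⟩ := AddSubgroup.mem_zmultiples_iff.1 (hmem x₀)
  have hconst : ∀ x, α' x - α x = α' x₀ - α x₀ := fun x =>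
    congrArg Subtype.val <| PreconnectedSpace.constant ‹_›
      (f := fun x => (⟨α' x - α x, hmem x⟩ : AddSubgroup.zmultiples θ)) (by fun_prop)
  refine ⟨n, fun x => ?_⟩
  rw [zsmul_eq_mul] at hn
  linarith [hconst x]

end Flow

theorem exists_homeomorph_addCircle_flow {F : Circle × ℝ → Circle} (hFc : Continuous F)
    (hFadd : ∀ z s t, F (F (z, s), t) = F (z, s + t)) {θ : ℝ} [Fact (0 < θ)] {z₀ : Circle}
    (hper : ∀ t, F (z₀, t) = z₀ ↔ ∃ n : ℤ, t = n * θ) :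
    ∃ W : AddCircle θ ≃ₜ Circle, ∀ x (t : ℝ), F (W x, t) = W (x + t) := by
  have hΦ := periodic_flow hFadd ((hper θ).2 ⟨1, by simp⟩)
  have hcont : Continuous hΦ.lift :=
    continuous_coinduced_dom.2 (hFc.comp (continuous_const.prodMk continuous_id))
  have hinj : Injective hΦ.lift := by
    rintro ⟨s⟩ ⟨t⟩ hst
    exact (flow_eq_flow_iff hFadd hper).1 hst
  refine ⟨hcont.homeoOfEquivCompactToT2 (f := .ofBijective _
    ⟨hinj, AddCircle.surjective_of_continuous_injective hcont hinj⟩), ?_⟩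
  rintro ⟨s⟩ t
  exact hFadd z₀ s t

theorem circle_flow_shift_degree_one_general (F : Circle × ℝ → Circle) (hFc : Continuous F)
    (hFadd : ∀ z s t, F (F (z, s), t) = F (z, s + t))
    (θ : ℝ) (hθ : 0 < θ)
    (hper : ∀ (z : Circle) (t : ℝ), F (z, t) = z ↔ ∃ n : ℤ, t = n * θ)
    (h : C(Circle, Circle)) :
    (ContinuousMap.Homotopic h (ContinuousMap.id Circle) ↔
      ∃ α : Circle → ℝ, Continuous α ∧ ∀ z, h z = F (z, α z)) ∧
    (∀ α α' : Circle → ℝ, Continuous α → Continuous α' →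
      (∀ z, h z = F (z, α z)) → (∀ z, h z = F (z, α' z)) →
      ∃ n : ℤ, ∀ z, α' z = α z + n * θ) := by
  have : Fact (0 < θ) := ⟨hθ⟩
  have hF0 : ∀ z, F (z, 0) = z := fun z => (hper z 0).2 ⟨0, by simp⟩
  refine ⟨⟨fun hh => ?_, fun ⟨α, hα, hαh⟩ => homotopic_id_of_eq_flow hFc hF0 hα hαh⟩,
    fun α α' hα hα' hαh hα'h => ?_⟩
  · obtain ⟨W, hW⟩ := exists_homeomorph_addCircle_flow hFc hFadd (hper 1)
    let e : C(Circle, AddCircle θ) := W.symm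
    obtain ⟨α, hα, hαe⟩ :=
      AddCircle.exists_continuous_eq_add_of_homotopic ((ContinuousMap.Homotopic.refl e).comp hh)
    refine ⟨α, hα, fun z => ?_⟩
    have hz : W.symm (h z) = W.symm z + α z := hαe z
    rw [← W.apply_symm_apply (h z), hz, ← hW, W.apply_symm_apply]
  · exact exists_int_eq_add_mul_of_flow_eq hFadd (fun z t => (hper z t).1) hα hα'
      fun z => (hαh z).symm.trans (hα'h z)

/-- For a fixed-point-free flow `F` on the circle (all orbits are the whole circle,
with common minimal period `θ > 0`): a continuous self-map `h` of the circle has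
degree `1` (is homotopic to the identity) iff it is a shift `h z = F (z, α z)`
along orbits by some continuous function `α`, and such `α` is unique up to adding
an integer multiple of `θ`. -/
theorem circle_flow_shift_degree_one (F : Circle × ℝ → Circle) (hFc : Continuous F)
    (hF0 : ∀ z, F (z, 0) = z) (hFadd : ∀ z s t, F (F (z, s), t) = F (z, s + t))
    (θ : ℝ) (hθ : 0 < θ)
    (hper : ∀ (z : Circle) (t : ℝ), F (z, t) = z ↔ ∃ n : ℤ, t = n * θ)
    (h : C(Circle, Circle)) :
    (ContinuousMap.Homotopic h (ContinuousMap.id Circle) ↔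
      ∃ α : Circle → ℝ, Continuous α ∧ ∀ z, h z = F (z, α z)) ∧
    (∀ α α' : Circle → ℝ, Continuous α → Continuous α' →
      (∀ z, h z = F (z, α z)) → (∀ z, h z = F (z, α' z)) →
      ∃ n : ℤ, ∀ z, α' z = α z + n * θ) :=
  circle_flow_shift_degree_one_general F hFc hFadd θ hθ hper h
end

section
/- Let α₀, α₁ : S¹ → ℝ be continuous functions and for t ∈ [0,1] define h_t : S¹ → S¹ by h_t(z) = z · exp(2πi·((1-t)α₀(z) + tα₁(z))). If h₀ and h₁ are homeomorphisms, then h_t is a homeomorphism for every t ∈ [0,1]. -/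
open Real Set

private noncomputable def ee (x : ℝ) : Circle := Circle.exp (2 * Real.pi * x)

private lemma ee_cont : Continuous ee :=
  Circle.exp.continuous.comp (continuous_const.mul continuous_id)

private lemma ee_eq_ee {a b : ℝ} : ee a = ee b ↔ ∃ n : ℤ, a = b + n := by
  unfold ee
  rw [Circle.exp_eq_exp]
  constructor
  · rintro ⟨m, hm⟩
    refine ⟨m, ?_⟩
    have hπ : (0:ℝ) < 2 * Real.pi := by positivity
    nlinarith [Real.pi_pos]
  · rintro ⟨n, hn⟩
    exact ⟨n, by rw [hn]; ring⟩

private lemma convex_pos {t d0 d1 : ℝ} (ht0 : 0 ≤ t) (ht1 : t ≤ 1)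
    (h0 : 0 < d0) (h1 : 0 < d1) : 0 < (1 - t) * d0 + t * d1 := by
  rcases eq_or_lt_of_le ht0 with h | h
  · rw [← h]; linarith
  · nlinarith

private lemma convex_lt_one {t d0 d1 : ℝ} (ht0 : 0 ≤ t) (ht1 : t ≤ 1)
    (h0 : d0 < 1) (h1 : d1 < 1) : (1 - t) * d0 + t * d1 < 1 := by
  rcases eq_or_lt_of_le ht0 with h | h
  · rw [← h]; linarith
  · nlinarith

private lemma ee_surj : Function.Surjective ee := by
  intro z
  refine ⟨Complex.arg z / (2 * Real.pi), ?_⟩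
  unfold ee
  rw [mul_div_cancel₀ _ (by positivity : (2:ℝ) * Real.pi ≠ 0)]
  exact Circle.exp_arg z

/-- The lift `F x = x + α (ee x)` of a shift homeomorphism is strictly monotone. -/
private lemma lift_strictMono (α : Circle → ℝ) (hα : Continuous α)
    (H : ∃ Φ : Circle ≃ₜ Circle, ∀ z, Φ z = z * Circle.exp (2 * Real.pi * α z)) :
    StrictMono (fun x : ℝ => x + α (ee x)) := by
  obtain ⟨Φ, hΦ⟩ := H
  set F : ℝ → ℝ := fun x => x + α (ee x) with hF
  have hFc : Continuous F := continuous_id.add (hα.comp ee_cont)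
  have key : ∀ x : ℝ, Φ (ee x) = ee (F x) := by
    intro x
    rw [hΦ, hF]
    show ee x * Circle.exp (2 * Real.pi * α (ee x)) = ee (x + α (ee x))
    unfold ee
    rw [mul_add, Circle.exp_add]
  have hFi : Function.Injective F := by
    intro a b hab
    by_cases h : ∃ n : ℤ, a = b + n
    · obtain ⟨n, hn⟩ := h
      have : ee a = ee b := ee_eq_ee.2 ⟨n, hn⟩
      have : α (ee a) = α (ee b) := by rw [this]
      have : a = b := by
        have := hab
        simp only [hF] at this
        linarith [this, ‹α (ee a) = α (ee b)›]
      exact this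
    · exfalso
      have : ee (F a) = ee (F b) := by rw [hab]
      rw [← key, ← key] at this
      have : ee a = ee b := Φ.injective this
      exact h (ee_eq_ee.1 this)
  rcases hFc.strictMono_of_inj hFi with h | h
  · exact h
  · exfalso
    have h01 : ee (0:ℝ) = ee (1:ℝ) := ee_eq_ee.2 ⟨-1, by push_cast; ring⟩
    have : F 1 = F 0 + 1 := by simp only [hF]; rw [← h01]; ring
    have := h (show (0:ℝ) < 1 by norm_num)
    linarith

/-- If the shift maps `z ↦ z · exp (2πi α₀ z)` and `z ↦ z · exp (2πi α₁ z)` are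
homeomorphisms of the circle, then so is the shift map associated with every
convex combination `(1-t)α₀ + tα₁`. -/
theorem convex_combination_of_circle_homeos (α₀ α₁ : Circle → ℝ)
    (hα₀ : Continuous α₀) (hα₁ : Continuous α₁)
    (H0 : ∃ Φ : Circle ≃ₜ Circle, ∀ z, Φ z = z * Circle.exp (2 * Real.pi * α₀ z))
    (H1 : ∃ Φ : Circle ≃ₜ Circle, ∀ z, Φ z = z * Circle.exp (2 * Real.pi * α₁ z))
    (t : ℝ) (ht : t ∈ Set.Icc (0 : ℝ) 1) :
    ∃ Φ : Circle ≃ₜ Circle,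
      ∀ z, Φ z = z * Circle.exp (2 * Real.pi * ((1 - t) * α₀ z + t * α₁ z)) := by
  obtain ⟨ht0, ht1⟩ := ht
  set β : Circle → ℝ := fun z => (1 - t) * α₀ z + t * α₁ z with hβ
  have hβc : Continuous β := ((continuous_const.mul hα₀).add (continuous_const.mul hα₁))
  set h : Circle → Circle := fun z => z * Circle.exp (2 * Real.pi * β z) with hh
  have hhc : Continuous h :=
    continuous_id.mul (Circle.exp.continuous.comp (continuous_const.mul hβc))
  set F : ℝ → ℝ := fun x => x + β (ee x) with hFdef
  have hFc : Continuous F := continuous_id.add (hβc.comp ee_cont)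
  have hM0 := lift_strictMono α₀ hα₀ H0
  have hM1 := lift_strictMono α₁ hα₁ H1
  have hFmono : StrictMono F := by
    intro a b hab
    have h0 := hM0 hab
    have h1 := hM1 hab
    simp only [hFdef, hβ]
    simp only at h0 h1
    have := convex_pos ht0 ht1 (show 0 < (b + α₀ (ee b)) - (a + α₀ (ee a)) by linarith)
      (show 0 < (b + α₁ (ee b)) - (a + α₁ (ee a)) by linarith)
    linarith
  have hkey : ∀ x : ℝ, h (ee x) = ee (F x) := by
    intro x
    simp only [hh, hFdef]
    show ee x * Circle.exp (2 * Real.pi * β (ee x)) = ee (x + β (ee x))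
    unfold ee
    rw [show 2 * Real.pi * (x + β (Circle.exp (2 * Real.pi * x)))
      = 2 * Real.pi * x + 2 * Real.pi * β (Circle.exp (2 * Real.pi * x)) from by ring,
      Circle.exp_add]
  have hFshift : ∀ (x : ℝ) (n : ℤ), F (x + n) = F x + n := by
    intro x n
    have : ee (x + n) = ee x := ee_eq_ee.2 ⟨n, rfl⟩
    simp only [hFdef, this]
    ring
  -- injectivity
  have hinj : Function.Injective h := by
    intro z w hzw
    by_contra hne
    obtain ⟨x, hx⟩ := ee_surj z
    obtain ⟨y₀, hy₀⟩ := ee_surj w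
    set y : ℝ := y₀ - ⌊y₀ - x⌋ with hy
    have hey : ee y = w := by
      rw [← hy₀]
      exact ee_eq_ee.2 ⟨-⌊y₀ - x⌋, by push_cast [hy]; ring⟩
    have hyx : x ≤ y ∧ y < x + 1 := by
      constructor
      · have := Int.floor_le (y₀ - x); simp only [hy]; linarith
      · have := Int.lt_floor_add_one (y₀ - x); simp only [hy]; linarith
    have hxy : x < y := by
      rcases lt_or_eq_of_le hyx.1 with h' | h'
      · exact h'
      · exact absurd (by rw [← hx, ← hey, h']) hne
    -- lifts
    have d0 : 0 < (y + α₀ (ee y)) - (x + α₀ (ee x)) ∧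
        (y + α₀ (ee y)) - (x + α₀ (ee x)) < 1 := by
      constructor
      · have := hM0 hxy; simp only at this; linarith
      · have h1 : ee (x + 1) = ee x := ee_eq_ee.2 ⟨1, by push_cast; ring⟩
        have := hM0 (show y < x + 1 from hyx.2)
        simp only [h1] at this; linarith
    have d1 : 0 < (y + α₁ (ee y)) - (x + α₁ (ee x)) ∧
        (y + α₁ (ee y)) - (x + α₁ (ee x)) < 1 := by
      constructor
      · have := hM1 hxy; simp only at this; linarith
      · have h1 : ee (x + 1) = ee x := ee_eq_ee.2 ⟨1, by push_cast; ring⟩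
        have := hM1 (show y < x + 1 from hyx.2)
        simp only [h1] at this; linarith
    have heq : ee (F y) = ee (F x) := by rw [← hkey, ← hkey, hx, hey, hzw]
    obtain ⟨n, hn⟩ := ee_eq_ee.1 heq
    have hval : F y - F x = (1 - t) * ((y + α₀ (ee y)) - (x + α₀ (ee x)))
        + t * ((y + α₁ (ee y)) - (x + α₁ (ee x))) := by
      simp only [hFdef, hβ]; ring
    have h0 : (0:ℝ) < F y - F x := by
      rw [hval]; exact convex_pos ht0 ht1 d0.1 d1.1
    have h1 : F y - F x < 1 := by
      rw [hval]; exact convex_lt_one ht0 ht1 d0.2 d1.2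
    have : F y - F x = (n:ℝ) := by rw [hn]; ring
    rw [this] at h0 h1
    have : (0:ℤ) < n := by exact_mod_cast h0
    have : n < 1 := by exact_mod_cast h1
    omega
  -- surjectivity
  have hsurj : Function.Surjective h := by
    intro u
    obtain ⟨r, hr⟩ := ee_surj u
    set m : ℤ := ⌊r - F 0⌋ with hm
    have hml : F ((m:ℝ)) ≤ r := by
      have := hFshift 0 m
      simp only [zero_add] at this
      rw [this]
      have := Int.floor_le (r - F 0)
      linarith
    have hmu : r ≤ F ((m:ℝ) + 1) := by
      have := hFshift 0 (m + 1)
      push_cast at this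
      simp only [zero_add] at this
      rw [this]
      have := Int.lt_floor_add_one (r - F 0)
      linarith
    obtain ⟨x, _, hx⟩ := intermediate_value_Icc
      (show (m:ℝ) ≤ (m:ℝ) + 1 by linarith) hFc.continuousOn ⟨hml, hmu⟩
    exact ⟨ee x, by rw [hkey, hx, hr]⟩
  refine ⟨Continuous.homeoOfEquivCompactToT2 (f := Equiv.ofBijective h ⟨hinj, hsurj⟩) hhc,
    fun z => rfl⟩
end
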